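/- Fix $h = (z_0, z_1) \in \mathbb{R}^d \times \mathbb{R}^d$ and $\sigma > 0$. Let $p_t(\cdot \mid h) = \mathcal{N}((1-t)z_0 + t z_1, \sigma^2 I)$ and $u_t(z \mid h) = z_1 - z_0$. Then the pair $(p_t, u_t)$ satisfies the continuity equation $\partial_t p_t(z) + \nabla_z \cdot (p_t(z)\, u_t(z)) = 0$ for all $t \in (0,1)$ and $z \in \mathbb{R}^d$. -/

import Mathlib

/-!
The path is a translate `p_t(z) = g(z - μ_t)` of a fixed Gaussian profile `g`, whose mean
`μ_t = z₀ + t (z₁ - z₀)` moves with constant velocity `v = z₁ - z₀`. By the chain rule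
`∂ₜ p_t(z) = -Dg(z - μ_t) v`, while the divergence of the flux `p_t v` is the directional
derivative `Dg(z - μ_t) v`, so the two cancel.
-/

open Real

theorem hasDerivAt_comp_sub_add_smul {E : Type*} [NormedAddCommGroup E] [NormedSpace ℝ E]
    {f : E → ℝ} {a v z : E} {t : ℝ}
    (hf : DifferentiableAt ℝ f (z - (a + t • v))) :
    HasDerivAt (fun s : ℝ => f (z - (a + s • v))) (-fderiv ℝ f (z - (a + t • v)) v) t := by
  have hpath : HasDerivAt (fun s : ℝ => z - (a + s • v)) (-v) t := by
    simpa using (((hasDerivAt_id t).smul_const v).const_add a).const_sub z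
  have hcomp := hf.hasFDerivAt.comp_hasDerivAt t hpath
  rwa [map_neg] at hcomp

section Divergence

variable {ι : Type*} [Fintype ι] [DecidableEq ι]

theorem sum_fderiv_mul_const_single {f : EuclideanSpace ℝ ι → ℝ} {z : EuclideanSpace ℝ ι}
    (hf : DifferentiableAt ℝ f z) (v : EuclideanSpace ℝ ι) :
    ∑ i, fderiv ℝ (fun w => f w * v i) z (EuclideanSpace.single i 1) = fderiv ℝ f z v := by
  conv_rhs => rw [← (EuclideanSpace.basisFun ι ℝ).sum_repr v]
  simp [fderiv_mul_const hf]

theorem continuity_equation_of_translation {f : EuclideanSpace ℝ ι → ℝ}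
    {a v z : EuclideanSpace ℝ ι} {t : ℝ} (hf : DifferentiableAt ℝ f (z - (a + t • v))) :
    deriv (fun s => f (z - (a + s • v))) t +
      ∑ i, fderiv ℝ (fun w => f (w - (a + t • v)) * v i) z (EuclideanSpace.single i 1) = 0 := by
  rw [(hasDerivAt_comp_sub_add_smul hf).deriv,
    sum_fderiv_mul_const_single ((differentiableAt_comp_sub _).mpr hf), fderiv_comp_sub,
    neg_add_cancel]

end Divergence

theorem differentiable_mul_exp_neg_norm_sq_div {E : Type*} [NormedAddCommGroup E]
    [InnerProductSpace ℝ E] (c σ : ℝ) :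
    Differentiable ℝ (fun x : E => c * exp (-‖x‖ ^ 2 / (2 * σ ^ 2))) := by
  have hnorm_sq : Differentiable ℝ (fun x : E => ‖x‖ ^ 2) := differentiable_id.norm_sq ℝ
  fun_prop

theorem icfm_continuity_equation_general {d : ℕ} (σ : ℝ)
    (z₀ z₁ : EuclideanSpace ℝ (Fin d))
    (p : ℝ → EuclideanSpace ℝ (Fin d) → ℝ)
    (hp : ∀ t z, p t z =
      (Real.sqrt ((2 * π * σ ^ 2) ^ d))⁻¹ *
        Real.exp (-‖z - ((1 - t) • z₀ + t • z₁)‖ ^ 2 / (2 * σ ^ 2))) :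
    ∀ t ∈ Set.Ioo (0:ℝ) 1, ∀ z : EuclideanSpace ℝ (Fin d),
      deriv (fun s => p s z) t +
        ∑ i : Fin d,
          fderiv ℝ (fun w => p t w * (z₁ - z₀) i) z (EuclideanSpace.single i 1) = 0 := by
  intro t _ z
  have hmean (s : ℝ) : (1 - s) • z₀ + s • z₁ = z₀ + s • (z₁ - z₀) := by module
  simp only [hp, hmean]
  exact continuity_equation_of_translation
    (differentiable_mul_exp_neg_norm_sq_div (E := EuclideanSpace ℝ (Fin d)) _ σ _)

/-- The I-CFM Gaussian conditional path `p_t = N((1-t)z₀ + t z₁, σ²I)` together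
with the constant vector field `u_t(z) = z₁ - z₀` satisfies the continuity
equation `∂ₜ p_t(z) + ∇_z · (p_t(z) u_t(z)) = 0` for all `t ∈ (0,1)` and all `z`. -/
theorem icfm_continuity_equation {d : ℕ} (σ : ℝ) (hσ : 0 < σ)
    (z₀ z₁ : EuclideanSpace ℝ (Fin d))
    (p : ℝ → EuclideanSpace ℝ (Fin d) → ℝ)
    (hp : ∀ t z, p t z =
      (Real.sqrt ((2 * π * σ ^ 2) ^ d))⁻¹ *
        Real.exp (-‖z - ((1 - t) • z₀ + t • z₁)‖ ^ 2 / (2 * σ ^ 2))) :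
    ∀ t ∈ Set.Ioo (0:ℝ) 1, ∀ z : EuclideanSpace ℝ (Fin d),
      deriv (fun s => p s z) t +
        ∑ i : Fin d,
          fderiv ℝ (fun w => p t w * (z₁ - z₀) i) z (EuclideanSpace.single i 1) = 0 :=
  icfm_continuity_equation_general σ z₀ z₁ p hp
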